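/- For every α ∈ L¹(X,ℝ), E^X_α(σ) → 1 as |σ| → ∞ with σ real. -/

import Mathlib

open MeasureTheory Filter

/-- The alternating exponent term κ(s₁,…,s_j). -/
noncomputable def kappaFn (x0 : ℝ) (j : ℕ) (s : Fin j → ℝ) : ℝ :=
  (∑ ν : Fin j, (-1 : ℝ) ^ (j - 1 - (ν : ℕ)) * s ν) - (if Odd j then x0 else 0)

/-- The ordered simplex {x₀ < s₁ < ⋯ < s_j < x₁}. -/
def simplexSet (x0 x1 : ℝ) (j : ℕ) : Set (Fin j → ℝ) :=
  {s | StrictMono s ∧ ∀ ν, s ν ∈ Set.Ioo x0 x1}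

/-- The j-th term C_j(σ) of the harmonic exponential series. -/
noncomputable def Cterm (x0 x1 : ℝ) (α : ℝ → ℝ) (j : ℕ) (σ : ℂ) : ℂ :=
  ∫ s in simplexSet x0 x1 j,
    Complex.exp (2 * Complex.I * σ * (kappaFn x0 j s : ℂ)) * ∏ ν : Fin j, (α (s ν) : ℂ)

/-- The harmonic exponential E^X_α(σ). -/
noncomputable def hexp (x0 x1 : ℝ) (α : ℝ → ℝ) (σ : ℂ) : ℂ :=
  1 + ∑' j : ℕ, Cterm x0 x1 α (j + 1) σ

/-- The L¹ norm of α on (x₀,x₁). -/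
noncomputable def L1normOn (x0 x1 : ℝ) (α : ℝ → ℝ) : ℝ :=
  ∫ x in Set.Ioo x0 x1, |α x|

/-- β_σ = 1 if Im σ ≥ 0, else e^{2|Im σ|(x₁−x₀)}. -/
noncomputable def betaSigma (x0 x1 : ℝ) (σ : ℂ) : ℝ :=
  if 0 ≤ σ.im then 1 else Real.exp (2 * |σ.im| * (x1 - x0))

/-!
For `j ≥ 1`, the term `C_j(σ)` is, up to a unimodular factor, the Fourier integral of the
integrable function `1_{simplex}(s) ∏ α(s_ν)` on `ℝʲ` at the point `2σ·(±1, …, ±1)`, so it tends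
to `0` by the Riemann–Lebesgue lemma. The ordered simplex has `j!` disjoint images under
permutations of the coordinates, whence `‖C_j(σ)‖ ≤ ‖α‖₁ʲ / j!` uniformly in `σ`, and dominated
convergence for series finishes the proof.
-/

open scoped Nat

lemma measurableSet_setOf_strictMono (n : ℕ) : MeasurableSet {s : Fin n → ℝ | StrictMono s} := by
  have : {s : Fin n → ℝ | StrictMono s}
      = ⋂ (i : Fin n) (j : Fin n) (_ : i < j), {s | s i < s j} := by
    ext s; simp [StrictMono]
  rw [this]
  exact .iInter fun i => .iInter fun j => .iInter fun _ =>
    measurableSet_lt (measurable_pi_apply i) (measurable_pi_apply j)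

lemma measurableSet_simplexSet (x0 x1 : ℝ) (n : ℕ) : MeasurableSet (simplexSet x0 x1 n) := by
  have : simplexSet x0 x1 n = {s | StrictMono s} ∩ ⋂ ν, (fun s => s ν) ⁻¹' Set.Ioo x0 x1 := by
    ext s; simp [simplexSet]
  rw [this]
  exact (measurableSet_setOf_strictMono n).inter <|
    .iInter fun ν => measurableSet_Ioo.preimage (measurable_pi_apply ν)

lemma Equiv.Perm.eq_of_strictMono_comp {α : Type*} [LinearOrder α] {n : ℕ} {s : Fin n → α}
    {τ τ' : Equiv.Perm (Fin n)} (h : StrictMono (s ∘ τ)) (h' : StrictMono (s ∘ τ')) : τ = τ' := by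
  have hs : Function.Injective s := by
    simpa [Function.comp_assoc] using h.injective.comp τ.symm.injective
  exact Equiv.ext fun i => hs (congrFun (Tuple.unique_monotone h.monotone h'.monotone) i)

section OrderedProduct

variable (μ : Measure ℝ) [SigmaFinite μ] {n : ℕ}

lemma setIntegral_strictMono_comp_perm_prod (q : ℝ → ℝ) (τ : Equiv.Perm (Fin n)) :
    ∫ s in {s : Fin n → ℝ | StrictMono (s ∘ τ)}, ∏ ν, q (s ν) ∂Measure.pi (fun _ => μ)
      = ∫ s in {s : Fin n → ℝ | StrictMono s}, ∏ ν, q (s ν) ∂Measure.pi (fun _ => μ) := by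
  have h := ((measurePreserving_piCongrLeft (fun _ => μ) τ).symm).setIntegral_preimage_emb
    (MeasurableEquiv.measurableEmbedding _) (fun s : Fin n → ℝ => ∏ ν, q (s ν)) {s | StrictMono s}
  rw [← h]
  exact setIntegral_congr_fun (measurableSet_setOf_strictMono n |>.preimage (by fun_prop))
    fun s _ => (Equiv.prod_comp τ fun ν => q (s ν)).symm

theorem setIntegral_strictMono_prod_le {q : ℝ → ℝ} (hq : Integrable q μ) (hq0 : 0 ≤ q) :
    ∫ s in {s : Fin n → ℝ | StrictMono s}, ∏ ν, q (s ν) ∂Measure.pi (fun _ => μ)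
      ≤ (∫ x, q x ∂μ) ^ n / n ! := by
  set S : Equiv.Perm (Fin n) → Set (Fin n → ℝ) := fun τ => {s | StrictMono (s ∘ τ)}
  have hS : ∀ τ, MeasurableSet (S τ) := fun τ =>
    (measurableSet_setOf_strictMono n).preimage (by fun_prop)
  have hdisj : Set.Pairwise (Finset.univ : Finset (Equiv.Perm (Fin n)))
      (Function.onFun Disjoint S) := fun τ _ τ' _ hne =>
    Set.disjoint_left.2 fun s h h' => hne (Equiv.Perm.eq_of_strictMono_comp h h')
  have hint : Integrable (fun s : Fin n → ℝ => ∏ ν, q (s ν)) (Measure.pi fun _ => μ) :=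
    Integrable.fintype_prod fun _ => hq
  rw [le_div_iff₀ (by positivity), mul_comm]
  calc (n ! : ℝ) * ∫ s in {s : Fin n → ℝ | StrictMono s}, ∏ ν, q (s ν) ∂Measure.pi (fun _ => μ)
      = ∑ τ : Equiv.Perm (Fin n), ∫ s in S τ, ∏ ν, q (s ν) ∂Measure.pi (fun _ => μ) := by
        simp [S, setIntegral_strictMono_comp_perm_prod, Fintype.card_perm]
    _ = ∫ s in ⋃ τ ∈ Finset.univ, S τ, ∏ ν, q (s ν) ∂Measure.pi (fun _ => μ) :=
        (integral_biUnion_finset _ (fun τ _ => hS τ) hdisj fun _ _ => hint.integrableOn).symm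
    _ ≤ ∫ s, ∏ ν, q (s ν) ∂Measure.pi (fun _ => μ) :=
        setIntegral_le_integral hint (.of_forall fun s => Finset.prod_nonneg fun ν _ => hq0 _)
    _ = (∫ x, q x ∂μ) ^ n := by simp [integral_fintype_prod_eq_pow]

end OrderedProduct

lemma norm_Cterm_le {x0 x1 : ℝ} {α : ℝ → ℝ} (hα : IntegrableOn α (Set.Ioo x0 x1)) (n : ℕ)
    (σ : ℝ) : ‖Cterm x0 x1 α n σ‖ ≤ L1normOn x0 x1 α ^ n / n ! := by
  set q : ℝ → ℝ := (Set.Ioo x0 x1).indicator fun x => |α x|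
  have hq : Integrable q := IntegrableOn.integrable_indicator hα.abs measurableSet_Ioo
  have hq0 : 0 ≤ q := Set.indicator_nonneg fun _ _ => abs_nonneg _
  have hL : ∫ x, q x = L1normOn x0 x1 α := integral_indicator measurableSet_Ioo
  have hnorm : ∀ s ∈ simplexSet x0 x1 n,
      ‖Complex.exp (2 * Complex.I * σ * (kappaFn x0 n s : ℂ)) * ∏ ν, (α (s ν) : ℂ)‖
        = ∏ ν, q (s ν) := by
    intro s hs
    have hunit : 2 * Complex.I * σ * (kappaFn x0 n s : ℂ)
        = ((2 * σ * kappaFn x0 n s : ℝ) : ℂ) * Complex.I := by push_cast; ring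
    rw [norm_mul, hunit, Complex.norm_exp_ofReal_mul_I, one_mul, norm_prod]
    exact Finset.prod_congr rfl fun ν _ => by
      rw [Complex.norm_real, Real.norm_eq_abs]
      exact (Set.indicator_of_mem (hs.2 ν) fun x => |α x|).symm
  calc ‖Cterm x0 x1 α n σ‖
      ≤ ∫ s in simplexSet x0 x1 n, ∏ ν, q (s ν) := by
        rw [← setIntegral_congr_fun (measurableSet_simplexSet x0 x1 n) hnorm]
        exact norm_integral_le_integral_norm _
    _ ≤ ∫ s in {s : Fin n → ℝ | StrictMono s}, ∏ ν, q (s ν) :=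
        setIntegral_mono_set (Integrable.fintype_prod fun _ => hq).integrableOn
          (.of_forall fun s => Finset.prod_nonneg fun ν _ => hq0 _)
          (.of_forall fun s hs => hs.1)
    _ ≤ L1normOn x0 x1 α ^ n / n ! := hL ▸ setIntegral_strictMono_prod_le volume hq hq0

open scoped FourierTransform in
theorem tendsto_integral_exp_mul_cocompact {V E : Type*} [NormedAddCommGroup E]
    [NormedSpace ℂ E] [AddCommGroup V] [TopologicalSpace V] [IsTopologicalAddGroup V]
    [T2Space V] [MeasurableSpace V] [BorelSpace V] [Module ℝ V] [ContinuousSMul ℝ V]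
    [FiniteDimensional ℝ V] (μ : Measure V) [μ.IsAddHaarMeasure] (f : V → E)
    {L : StrongDual ℝ V} (hL : L ≠ 0) :
    Tendsto (fun σ : ℝ => ∫ v, Complex.exp (σ * L v * Complex.I) • f v ∂μ) (cocompact ℝ)
      (nhds 0) := by
  have hc : -(2 * Real.pi)⁻¹ • L ≠ 0 := smul_ne_zero (by simp [Real.pi_ne_zero]) hL
  refine ((tendsto_integral_exp_smul_cocompact f μ).comp
    (isClosedEmbedding_smul_left hc).tendsto_cocompact).congr fun σ => ?_
  refine integral_congr_ae (.of_forall fun v => ?_)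
  simp only [Circle.smul_def, Real.fourierChar_apply,
    FunLike.coe_smul, Pi.smul_apply, smul_eq_mul]
  congr 2
  push_cast
  field_simp

noncomputable def kappaLinear (n : ℕ) : StrongDual ℝ (Fin n → ℝ) :=
  ∑ ν : Fin n, (-1 : ℝ) ^ (n - 1 - (ν : ℕ)) • ContinuousLinearMap.proj ν

lemma kappaFn_eq_kappaLinear_sub (x0 : ℝ) (n : ℕ) (s : Fin n → ℝ) :
    kappaFn x0 n s = kappaLinear n s - if Odd n then x0 else 0 := by
  simp [kappaFn, kappaLinear]

lemma kappaLinear_ne_zero {n : ℕ} (hn : 0 < n) : kappaLinear n ≠ 0 := by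
  intro h
  have := congrArg (fun L => L (Pi.single ⟨0, hn⟩ 1)) h
  simp [kappaLinear, Pi.single_apply] at this

lemma Cterm_eq_exp_mul_integral (x0 x1 : ℝ) (α : ℝ → ℝ) (n : ℕ) (σ : ℝ) :
    Cterm x0 x1 α n σ = Complex.exp ((-2 * σ * (if Odd n then x0 else 0) : ℝ) * Complex.I) *
      ∫ s, Complex.exp (σ * ((2 : ℝ) • kappaLinear n) s * Complex.I) •
        (simplexSet x0 x1 n).indicator (fun s => ∏ ν, (α (s ν) : ℂ)) s := by
  rw [Cterm, ← integral_indicator (measurableSet_simplexSet x0 x1 n), ← integral_const_mul]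
  refine integral_congr_ae (.of_forall fun s => ?_)
  by_cases hs : s ∈ simplexSet x0 x1 n
  · simp only [Set.indicator_of_mem hs, smul_eq_mul, ← mul_assoc, ← Complex.exp_add,
      kappaFn_eq_kappaLinear_sub, smul_apply]
    congr 2
    push_cast
    ring
  · simp [Set.indicator_of_notMem hs]

lemma Cterm_tendsto_zero (x0 x1 : ℝ) (α : ℝ → ℝ) {n : ℕ} (hn : 0 < n) :
    Tendsto (fun σ : ℝ => Cterm x0 x1 α n σ) (cocompact ℝ) (nhds 0) := by
  have h := tendsto_integral_exp_mul_cocompact volume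
    ((simplexSet x0 x1 n).indicator fun s => ∏ ν, (α (s ν) : ℂ))
    (smul_ne_zero (two_ne_zero (α := ℝ)) (kappaLinear_ne_zero hn))
  rw [tendsto_zero_iff_norm_tendsto_zero] at h ⊢
  refine h.congr fun σ => ?_
  rw [Cterm_eq_exp_mul_integral, norm_mul, Complex.norm_exp_ofReal_mul_I, one_mul]

theorem hexp_tendsto_one_general (x0 x1 : ℝ) (α : ℝ → ℝ)
    (hα : IntegrableOn α (Set.Ioo x0 x1)) :
    Tendsto (fun σ : ℝ => hexp x0 x1 α (σ : ℂ)) (cocompact ℝ) (nhds 1) := by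
  have hsum : Summable fun j : ℕ => L1normOn x0 x1 α ^ (j + 1) / (j + 1)! :=
    (summable_nat_add_iff 1).mpr (Real.summable_pow_div_factorial _)
  have hterms := tendsto_tsum_of_dominated_convergence hsum
    (fun j => Cterm_tendsto_zero x0 x1 α j.succ_pos)
    (.of_forall fun σ j => norm_Cterm_le hα (j + 1) σ)
  simpa [hexp] using (tendsto_const_nhds (x := (1 : ℂ))).add hterms

theorem hexp_tendsto_one (x0 x1 : ℝ) (hx : x0 < x1) (α : ℝ → ℝ)
    (hα : IntegrableOn α (Set.Ioo x0 x1)) :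
    Tendsto (fun σ : ℝ => hexp x0 x1 α (σ : ℂ)) (cocompact ℝ) (nhds 1) :=
  hexp_tendsto_one_general x0 x1 α hα
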